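/- Let X be a normal topological space. Then for every continuous map χ : X → V there exists a continuous map λ : X → I₀¹ with π ∘ λ = χ. -/

import Mathlib

open unitInterval

/-- The interval with doubled endpoints: `[0,1]` together with extra points
`0' = Sum.inr false` and `1' = Sum.inr true`, with `0 ⤳ 0'` and `1 ⤳ 1'`. -/
def I01 : Type := unitInterval ⊕ Bool

instance : TopologicalSpace I01 where
  IsOpen U := IsOpen (Sum.inl ⁻¹' U : Set unitInterval) ∧
    (Sum.inr false ∈ U → Sum.inl (0 : unitInterval) ∈ U) ∧
    (Sum.inr true ∈ U → Sum.inl (1 : unitInterval) ∈ U)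
  isOpen_univ := ⟨isOpen_univ, fun _ => trivial, fun _ => trivial⟩
  isOpen_inter U V hU hV := ⟨hU.1.inter hV.1,
    fun h => ⟨hU.2.1 h.1, hV.2.1 h.2⟩, fun h => ⟨hU.2.2 h.1, hV.2.2 h.2⟩⟩
  isOpen_sUnion S hS := by
    refine ⟨?_, ?_, ?_⟩
    · exact (congrArg IsOpen (show (Sum.inl ⁻¹' ⋃₀ S : Set unitInterval) =
        ⋃ U ∈ S, (Sum.inl ⁻¹' U : Set unitInterval) from Set.preimage_sUnion)).mpr
        (isOpen_biUnion fun U hU => (hS U hU).1)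
    · rintro ⟨U, hU, hmem⟩
      exact ⟨U, hU, (hS U hU).2.1 hmem⟩
    · rintro ⟨U, hU, hmem⟩
      exact ⟨U, hU, (hS U hU).2.2 hmem⟩

/-- The three-point space with an open point `c` and two closed points `L`, `R`. -/
inductive V : Type
  | L | c | R

instance : TopologicalSpace V where
  IsOpen U := (V.L ∈ U → V.c ∈ U) ∧ (V.R ∈ U → V.c ∈ U)
  isOpen_univ := ⟨fun _ => trivial, fun _ => trivial⟩
  isOpen_inter U W hU hW := ⟨fun h => ⟨hU.1 h.1, hW.1 h.2⟩, fun h => ⟨hU.2 h.1, hW.2 h.2⟩⟩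
  isOpen_sUnion S hS := by
    constructor
    · rintro ⟨U, hU, hmem⟩
      exact ⟨U, hU, (hS U hU).1 hmem⟩
    · rintro ⟨U, hU, hmem⟩
      exact ⟨U, hU, (hS U hU).2 hmem⟩

/-- The map `π : I₀¹ → V` collapsing `[0,1]` to the open point `c`. -/
def pi1 : I01 → V
  | Sum.inl _ => V.c
  | Sum.inr false => V.L
  | Sum.inr true => V.R

/-- The map `ι : I₀¹ → [0,1]` collapsing the doubled endpoints. -/
def iota : I01 → unitInterval
  | Sum.inl x => x
  | Sum.inr false => 0
  | Sum.inr true => 1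

/-! Urysohn's lemma gives `g : X → [0,1]` vanishing on `χ⁻¹(L)` and equal to `1` on `χ⁻¹(R)`;
the lift sends `x` to `0'`, `1'` or `g x` according to `χ x`. It is continuous because `I₀¹`
carries the topology induced by `(ι, π) : I₀¹ → [0,1] × V`, and both components of the lift
composed with `(ι, π)`, namely `g` and `χ`, are continuous. -/

open Set Topology

theorem exists_continuous_unitInterval_zero_one_of_isClosed {X : Type*} [TopologicalSpace X]
    [NormalSpace X] {s t : Set X} (hs : IsClosed s) (ht : IsClosed t) (hd : Disjoint s t) :
    ∃ g : X → unitInterval, Continuous g ∧ EqOn g 0 s ∧ EqOn g 1 t := by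
  obtain ⟨f, hf0, hf1, hfI⟩ := exists_continuous_zero_one_of_isClosed hs ht hd
  exact ⟨fun x => ⟨f x, hfI x⟩, f.continuous.subtype_mk hfI,
    fun x hx => Subtype.ext (hf0 hx), fun x hx => Subtype.ext (hf1 hx)⟩

namespace V

theorem isOpen_of_c_mem {W : Set V} (hc : V.c ∈ W) : IsOpen W :=
  ⟨fun _ => hc, fun _ => hc⟩

theorem isClosed_singleton_L : IsClosed {V.L} :=
  isOpen_compl_iff.1 (isOpen_of_c_mem (by simp))

theorem isClosed_singleton_R : IsClosed {V.R} :=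
  isOpen_compl_iff.1 (isOpen_of_c_mem (by simp))

end V

theorem continuous_pi1 : Continuous pi1 :=
  ⟨fun W hW => ⟨continuous_const.isOpen_preimage W hW, hW.1, hW.2⟩⟩

theorem continuous_iota : Continuous iota :=
  ⟨fun _ hO => ⟨hO, id, id⟩⟩

theorem pi1_eq_L_iff {p : I01} : pi1 p = V.L ↔ p = Sum.inr false := by
  refine ⟨fun h => ?_, fun h => h ▸ rfl⟩
  rcases p with _ | _ | _ <;> first | rfl | cases h

theorem pi1_eq_R_iff {p : I01} : pi1 p = V.R ↔ p = Sum.inr true := by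
  refine ⟨fun h => ?_, fun h => h ▸ rfl⟩
  rcases p with _ | _ | _ <;> first | rfl | cases h

theorem isInducing_iota_prodMk_pi1 : IsInducing fun p => (iota p, pi1 p) := by
  refine (isInducing_iff _).2 <|
    le_antisymm (continuous_iota.prodMk continuous_pi1).le_induced fun U hU => ?_
  refine ⟨(Sum.inl ⁻¹' U) ×ˢ insert V.c (pi1 '' U),
    hU.1.prod (V.isOpen_of_c_mem (mem_insert _ _)), ?_⟩
  rw [mk_preimage_prod]
  ext (x | _ | _)
  · exact and_iff_left (mem_insert _ _)
  · refine ⟨fun ⟨_, h⟩ => ?_, fun h => ⟨hU.2.1 h, Or.inr ⟨_, h, rfl⟩⟩⟩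
    obtain h | ⟨q, hq, hqL⟩ := h
    · cases h
    · exact pi1_eq_L_iff.1 hqL ▸ hq
  · refine ⟨fun ⟨_, h⟩ => ?_, fun h => ⟨hU.2.2 h, Or.inr ⟨_, h, rfl⟩⟩⟩
    obtain h | ⟨q, hq, hqR⟩ := h
    · cases h
    · exact pi1_eq_R_iff.1 hqR ▸ hq

namespace I01

def mk (t : unitInterval) : V → I01
  | V.L => Sum.inr false
  | V.c => Sum.inl t
  | V.R => Sum.inr true

theorem pi1_mk (t : unitInterval) (v : V) : pi1 (mk t v) = v := by
  cases v <;> rfl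

theorem iota_mk {t : unitInterval} {v : V} (hL : v = V.L → t = 0) (hR : v = V.R → t = 1) :
    iota (mk t v) = t := by
  cases v
  · exact (hL rfl).symm
  · rfl
  · exact (hR rfl).symm

end I01

/-- if `X` is normal, every continuous `χ : X → V` lifts through
`π : I₀¹ → V`. -/
theorem lifts_of_normal (X : Type) [TopologicalSpace X] [NormalSpace X] :
    ∀ χ : X → V, Continuous χ →
      ∃ lam : X → I01, Continuous lam ∧ pi1 ∘ lam = χ := by
  intro χ hχ
  obtain ⟨g, hg, hg0, hg1⟩ := exists_continuous_unitInterval_zero_one_of_isClosed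
    (V.isClosed_singleton_L.preimage hχ) (V.isClosed_singleton_R.preimage hχ)
    (Disjoint.preimage χ (by simp))
  have hiota (x : X) : iota (I01.mk (g x) (χ x)) = g x := I01.iota_mk (hg0 ·) (hg1 ·)
  have hpi1 (x : X) : pi1 (I01.mk (g x) (χ x)) = χ x := I01.pi1_mk _ _
  refine ⟨fun x => I01.mk (g x) (χ x), ?_, funext hpi1⟩
  refine isInducing_iota_prodMk_pi1.continuous_iff.2 (continuous_prodMk.2 ⟨?_, ?_⟩)
  · simpa only [Function.comp_def, hiota] using hg
  · simpa only [Function.comp_def, hpi1] using hχ
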